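/- Let A be an n×n positive semidefinite matrix and B an n×n positive definite matrix, partitioned conformally into m×m blocks with B block diagonal. Let à be the block diagonal part of A. Then rank_B(A) ≤ rank_B(Ã), where rank_B(S) := trace(S(S+B)^{-1}). -/

import Mathlib

open Matrix

private lemma trace_psd_nonneg {n : ℕ} {M : Matrix (Fin n) (Fin n) ℝ}
    (hM : M.PosSemidef) : 0 ≤ M.trace := by
  obtain ⟨C, rfl⟩ : ∃ C : Matrix (Fin n) (Fin n) ℝ, _ = Cᴴ * C := by
    open scoped MatrixOrder in exact CStarAlgebra.nonneg_iff_eq_star_mul_self.mp hM.nonneg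
  simp only [Matrix.trace, Matrix.diag, Matrix.mul_apply, Matrix.conjTranspose_apply,
    star_trivial]
  exact Finset.sum_nonneg fun i _ => Finset.sum_nonneg fun j _ => mul_self_nonneg _

private lemma trace_mul_psd_nonneg {n : ℕ} {P M : Matrix (Fin n) (Fin n) ℝ}
    (hP : P.PosSemidef) (hM : M.PosSemidef) : 0 ≤ (P * M).trace := by
  obtain ⟨C, rfl⟩ : ∃ C : Matrix (Fin n) (Fin n) ℝ, _ = Cᴴ * C := by
    open scoped MatrixOrder in exact CStarAlgebra.nonneg_iff_eq_star_mul_self.mp hP.nonneg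
  rw [Matrix.mul_assoc, Matrix.trace_mul_comm]
  exact trace_psd_nonneg (hM.mul_mul_conjTranspose_same C)

/-- Block diagonal bound for the generalized soft rank: if `A ⪰ 0`, `B ≻ 0`, both are
partitioned conformally into blocks (encoded by a pinching `P(X) = ∑ᵢ Dᵢ X Dᵢ` with
diagonal orthogonal 0/1 projections `Dᵢ` summing to `I`), `B` is block diagonal
(`P(B) = B`), and `Ã = P(A)` is the block diagonal part of `A`, then
`rank_B(A) ≤ rank_B(Ã)` where `rank_B(S) = trace (S (S + B)⁻¹)`. -/
theorem softRank_le_blockDiag {n m : ℕ}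
    (A B : Matrix (Fin n) (Fin n) ℝ) (hA : A.PosSemidef) (hB : B.PosDef)
    (D : Fin m → Matrix (Fin n) (Fin n) ℝ)
    (hdiag : ∀ i, (D i).IsDiag)
    (h01 : ∀ i k, D i k k = 0 ∨ D i k k = 1)
    (hsum : ∑ i, D i = 1)
    (horth : ∀ i j, i ≠ j → D i * D j = 0)
    (hBblock : ∑ i, D i * B * D i = B) :
    (A * (A + B)⁻¹).trace
      ≤ ((∑ i, D i * A * D i) * ((∑ i, D i * A * D i) + B)⁻¹).trace := by
  classical
  set At := ∑ i, D i * A * D i with hAt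
  set Y := At + B with hYdef
  set X := A + B with hXdef
  -- basic facts about the projections
  have hDct : ∀ i, (D i)ᴴ = D i := by
    intro i; ext a b
    rw [conjTranspose_apply, star_trivial]
    by_cases hab : a = b
    · rw [hab]
    · rw [show D i b a = 0 from hdiag i (Ne.symm hab), show D i a b = 0 from hdiag i hab]
  have hDsq : ∀ i, D i * D i = D i := by
    intro i; ext a b
    rw [mul_apply]
    by_cases hab : a = b
    · subst hab
      rw [Finset.sum_eq_single a (fun k _ hk => by
            rw [show D i a k = 0 from hdiag i (Ne.symm hk), zero_mul])
          (fun h => absurd (Finset.mem_univ a) h)]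
      rcases h01 i a with h | h <;> rw [h] <;> ring
    · rw [show D i a b = 0 from hdiag i hab]
      apply Finset.sum_eq_zero
      intro k _
      by_cases hk : a = k
      · subst hk; rw [show D i a b = 0 from hdiag i hab, mul_zero]
      · rw [show D i a k = 0 from hdiag i hk, zero_mul]
  have key : ∀ (M : Matrix (Fin n) (Fin n) ℝ) i,
      D i * (∑ j, D j * M * D j) = D i * M * D i := by
    intro M i
    rw [Finset.mul_sum]
    rw [Finset.sum_eq_single i]
    · rw [← Matrix.mul_assoc, ← Matrix.mul_assoc, hDsq i]
    · intro j _ hj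
      rw [← Matrix.mul_assoc, ← Matrix.mul_assoc, horth i j (Ne.symm hj), Matrix.zero_mul,
        Matrix.zero_mul]
    · intro h; exact absurd (Finset.mem_univ i) h
  have key' : ∀ (M : Matrix (Fin n) (Fin n) ℝ) i,
      (∑ j, D j * M * D j) * D i = D i * M * D i := by
    intro M i
    rw [Finset.sum_mul]
    rw [Finset.sum_eq_single i]
    · rw [Matrix.mul_assoc, hDsq i]
    · intro j _ hj
      rw [Matrix.mul_assoc, horth j i hj, Matrix.mul_zero]
    · intro h; exact absurd (Finset.mem_univ i) h
  -- commutation with the block diagonal matrices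
  have hDAt : ∀ i, D i * At = At * D i := by
    intro i; rw [hAt]; exact (key A i).trans (key' A i).symm
  have hDB : ∀ i, D i * B = B * D i := by
    intro i
    have h1 := key B i
    have h2 := key' B i
    rw [hBblock] at h1 h2
    exact h1.trans h2.symm
  have hDY : ∀ i, D i * Y = Y * D i := by
    intro i; rw [hYdef, Matrix.mul_add, Matrix.add_mul, hDAt i, hDB i]
  -- positivity
  have hAtPSD : At.PosSemidef := by
    rw [hAt]
    refine Finset.sum_induction _ Matrix.PosSemidef (fun x y hx hy => hx.add hy)
      Matrix.PosSemidef.zero fun i _ => ?_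
    have h := hA.mul_mul_conjTranspose_same (D i)
    rwa [hDct i] at h
  have hXpd : X.PosDef := by rw [hXdef]; exact Matrix.PosDef.posSemidef_add hA hB
  have hYpd : Y.PosDef := by rw [hYdef]; exact Matrix.PosDef.posSemidef_add hAtPSD hB
  have hXdet : IsUnit X.det := hXpd.det_pos.ne'.isUnit
  have hYdet : IsUnit Y.det := hYpd.det_pos.ne'.isUnit
  have hXinv : X * X⁻¹ = 1 := Matrix.mul_nonsing_inv X hXdet
  have hXinv' : X⁻¹ * X = 1 := Matrix.nonsing_inv_mul X hXdet
  have hYinv : Y * Y⁻¹ = 1 := Matrix.mul_nonsing_inv Y hYdet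
  have hYinv' : Y⁻¹ * Y = 1 := Matrix.nonsing_inv_mul Y hYdet
  -- D i commutes with Y⁻¹
  have hDT : ∀ i, D i * Y⁻¹ = Y⁻¹ * D i := by
    intro i
    have h : Y⁻¹ * ((D i * Y) * Y⁻¹) = Y⁻¹ * ((Y * D i) * Y⁻¹) := by rw [hDY i]
    rw [Matrix.mul_assoc (D i) Y Y⁻¹, hYinv, Matrix.mul_one] at h
    rw [← Matrix.mul_assoc Y⁻¹ (Y * D i) Y⁻¹, ← Matrix.mul_assoc Y⁻¹ Y (D i), hYinv',
      Matrix.one_mul] at h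
    exact h.symm
  -- trace identity for matrices commuting with all the D i
  have htr : ∀ (M X0 : Matrix (Fin n) (Fin n) ℝ), (∀ i, D i * M = M * D i) →
      (M * ∑ i, D i * X0 * D i).trace = (M * X0).trace := by
    intro M X0 hM
    have hterm : ∀ i, (M * (D i * X0 * D i)).trace = (M * (D i * X0)).trace := by
      intro i
      rw [← Matrix.mul_assoc, trace_mul_comm, ← Matrix.mul_assoc, hM i, Matrix.mul_assoc,
        ← Matrix.mul_assoc (D i) (D i) X0, hDsq i]
    calc (M * ∑ i, D i * X0 * D i).trace
        = ∑ i, (M * (D i * X0 * D i)).trace := by rw [Finset.mul_sum, trace_sum]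
      _ = ∑ i, (M * (D i * X0)).trace := Finset.sum_congr rfl fun i _ => hterm i
      _ = (M * X0).trace := by
          rw [← trace_sum, ← Finset.mul_sum, ← Finset.sum_mul, hsum, Matrix.one_mul]
  -- the pinching of X is Y
  have hPX : ∑ i, D i * X * D i = Y := by
    rw [hYdef, hAt, ← hBblock, ← Finset.sum_add_distrib]
    refine Finset.sum_congr rfl fun i _ => ?_
    rw [hXdef, Matrix.mul_add, Matrix.add_mul]
  -- Y⁻¹ * B * Y⁻¹ commutes with all D i
  have hMcomm : ∀ i, D i * (Y⁻¹ * B * Y⁻¹) = (Y⁻¹ * B * Y⁻¹) * D i := by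
    intro i
    rw [← Matrix.mul_assoc, ← Matrix.mul_assoc, hDT i, Matrix.mul_assoc Y⁻¹ (D i) B, hDB i,
      ← Matrix.mul_assoc Y⁻¹ B (D i), Matrix.mul_assoc (Y⁻¹ * B) (D i) Y⁻¹, hDT i,
      ← Matrix.mul_assoc (Y⁻¹ * B) Y⁻¹ (D i)]
  -- key trace computation: tr(B Y⁻¹ X Y⁻¹) = tr(B Y⁻¹)
  have hTXT : (B * (Y⁻¹ * X * Y⁻¹)).trace = (B * Y⁻¹).trace := by
    have e2 : (Y⁻¹ * B * Y⁻¹) * Y = Y⁻¹ * B := by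
      rw [Matrix.mul_assoc (Y⁻¹ * B) Y⁻¹ Y, hYinv', Matrix.mul_one]
    calc (B * (Y⁻¹ * X * Y⁻¹)).trace
        = ((Y⁻¹ * B * Y⁻¹) * X).trace := by
          rw [← Matrix.mul_assoc, trace_mul_comm, ← Matrix.mul_assoc, ← Matrix.mul_assoc]
      _ = ((Y⁻¹ * B * Y⁻¹) * ∑ i, D i * X * D i).trace := (htr _ _ hMcomm).symm
      _ = ((Y⁻¹ * B * Y⁻¹) * Y).trace := by rw [hPX]
      _ = (B * Y⁻¹).trace := by rw [e2, trace_mul_comm]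
  -- the quadratic expansion
  have hexp : (X⁻¹ - Y⁻¹) * X * (X⁻¹ - Y⁻¹) = X⁻¹ - Y⁻¹ - Y⁻¹ + Y⁻¹ * X * Y⁻¹ := by
    rw [Matrix.sub_mul, hXinv', Matrix.sub_mul, Matrix.one_mul, Matrix.mul_sub,
      Matrix.mul_assoc Y⁻¹ X X⁻¹, hXinv, Matrix.mul_one]
    abel
  -- positivity of the quadratic term
  have hherm : (X⁻¹ - Y⁻¹)ᴴ = X⁻¹ - Y⁻¹ := by
    rw [conjTranspose_sub, hXpd.inv.isHermitian.eq, hYpd.inv.isHermitian.eq]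
  have hpsd : ((X⁻¹ - Y⁻¹) * X * (X⁻¹ - Y⁻¹)).PosSemidef := by
    have h := hXpd.posSemidef.mul_mul_conjTranspose_same (X⁻¹ - Y⁻¹)
    rwa [hherm] at h
  have hkey : 0 ≤ (B * ((X⁻¹ - Y⁻¹) * X * (X⁻¹ - Y⁻¹))).trace :=
    trace_mul_psd_nonneg hB.posSemidef hpsd
  rw [hexp, Matrix.mul_add, Matrix.mul_sub, Matrix.mul_sub, trace_add, trace_sub,
    trace_sub] at hkey
  have hmain : (B * Y⁻¹).trace ≤ (B * X⁻¹).trace := by linarith [hTXT]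
  -- rewrite both sides of the goal
  have h1 : A * X⁻¹ = 1 - B * X⁻¹ := by
    have h := hXinv
    rw [hXdef, Matrix.add_mul, ← hXdef] at h
    exact eq_sub_of_add_eq h
  have h2 : At * Y⁻¹ = 1 - B * Y⁻¹ := by
    have h := hYinv
    rw [hYdef, Matrix.add_mul, ← hYdef] at h
    exact eq_sub_of_add_eq h
  rw [h1, h2, trace_sub, trace_sub]
  linarith [hmain]
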